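/- Let V, H be positive integers, W ∈ ℝ^{V×H} with rows w_1,…,w_V, and x ∈ [−1,1]^V. Then the encoding objective e ↦ Σ_{v=1}^V β_v^W(e, x) = Σ_{v=1}^V [ −x_v·(w_vᵀe) + Ψ(w_vᵀe) ] is convex on ℝ^H and Lipschitz continuous with respect to the Euclidean norm with Lipschitz constant at most 2·Σ_{v=1}^V ‖w_v‖₂. -/

import Mathlib

/-- The potential well `Ψ(m) = ln(1+eᵐ) + ln(1+e⁻ᵐ)`. -/
noncomputable def Psi (m : ℝ) : ℝ := Real.log (1 + Real.exp m) + Real.log (1 + Real.exp (-m))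

/-!
Since `Ψ' = σ(m) - σ(-m)` with `σ` the sigmoid, `Ψ'` is nondecreasing with values in `[-1, 1]`, so `Ψ`
is convex and `1`-Lipschitz. Each summand is therefore a convex, `2`-Lipschitz function of `w_vᵀe`,
and Cauchy–Schwarz bounds `|w_vᵀe - w_vᵀe'|` by `‖w_v‖ ‖e - e'‖`.
-/

open Real Finset

lemma hasDerivAt_log_one_add_exp (m : ℝ) :
    HasDerivAt (fun t => log (1 + exp t)) (sigmoid m) m := by
  convert ((hasDerivAt_exp m).const_add 1).log (by positivity) using 1
  rw [sigmoid_def, exp_neg]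
  field_simp
  ring

lemma hasDerivAt_Psi (m : ℝ) : HasDerivAt Psi (sigmoid m - sigmoid (-m)) m := by
  have hneg : HasDerivAt (fun t => log (1 + exp (-t))) (-sigmoid (-m)) m := by
    simpa [Function.comp_def] using (hasDerivAt_log_one_add_exp (-m)).comp m (hasDerivAt_neg m)
  rw [sub_eq_add_neg]
  exact (hasDerivAt_log_one_add_exp m).fun_add hneg

lemma differentiable_Psi : Differentiable ℝ Psi :=
  fun m => (hasDerivAt_Psi m).differentiableAt

lemma deriv_Psi : deriv Psi = fun m => sigmoid m - sigmoid (-m) :=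
  funext fun m => (hasDerivAt_Psi m).deriv

lemma convexOn_Psi : ConvexOn ℝ Set.univ Psi := by
  refine Monotone.convexOn_univ_of_deriv differentiable_Psi ?_
  rw [deriv_Psi]
  exact fun a b hab => sub_le_sub (sigmoid_le hab) (sigmoid_le (neg_le_neg hab))

lemma lipschitzWith_Psi : LipschitzWith 1 Psi := by
  refine lipschitzWith_of_nnnorm_deriv_le differentiable_Psi fun m => ?_
  rw [deriv_Psi, ← NNReal.coe_le_coe, coe_nnnorm, NNReal.coe_one, Real.norm_eq_abs]
  exact abs_sub_le_of_nonneg_of_le (sigmoid_nonneg _) (sigmoid_le_one _) (sigmoid_nonneg _)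
    (sigmoid_le_one _)

lemma lipschitzWith_mul_add_Psi {c : ℝ} (hc : |c| ≤ 1) :
    LipschitzWith 2 fun t => c * t + Psi t := by
  refine ((lipschitzWith_smul c).add lipschitzWith_Psi).weaken ?_
  rw [← NNReal.coe_le_coe]
  push_cast
  rw [Real.norm_eq_abs]
  linarith

lemma abs_dotProduct_le {ι : Type*} [Fintype ι] (v w : ι → ℝ) :
    |v ⬝ᵥ w| ≤ √(∑ i, v i ^ 2) * √(∑ i, w i ^ 2) :=
  (abs_le_sqrt (sum_mul_sq_le_sq_mul_sq _ _ _)).trans_eq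
    (sqrt_mul (sum_nonneg fun _ _ => sq_nonneg _) _)

theorem ConvexOn.fun_sum {𝕜 E β ι : Type*} [Semiring 𝕜] [PartialOrder 𝕜] [AddCommMonoid E]
    [AddCommMonoid β] [PartialOrder β] [IsOrderedAddMonoid β] [SMul 𝕜 E] [Module 𝕜 β]
    {D : Set E} (hD : Convex 𝕜 D) (s : Finset ι) {f : ι → E → β}
    (hf : ∀ i ∈ s, ConvexOn 𝕜 D (f i)) : ConvexOn 𝕜 D fun x => ∑ i ∈ s, f i x := by
  classical
  induction s using Finset.induction with
  | empty => simpa using convexOn_const 0 hD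
  | insert i s hi ih =>
    simp only [sum_insert hi]
    exact (hf i (mem_insert_self i s)).add (ih fun j hj => hf j (mem_insert_of_mem hj))

lemma ConvexOn.comp_dotProduct {ι : Type*} [Fintype ι] {φ : ℝ → ℝ} (hφ : ConvexOn ℝ Set.univ φ)
    (w : ι → ℝ) : ConvexOn ℝ Set.univ fun e => φ (w ⬝ᵥ e) :=
  hφ.comp_linearMap (dotProductBilin ℝ ℝ w)

lemma abs_sum_comp_dotProduct_sub_le {ι κ : Type*} [Fintype κ] (s : Finset ι) (W : ι → κ → ℝ)
    {φ : ι → ℝ → ℝ} {K : NNReal} (hφ : ∀ i ∈ s, LipschitzWith K (φ i)) (e e' : κ → ℝ) :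
    |∑ i ∈ s, φ i (W i ⬝ᵥ e) - ∑ i ∈ s, φ i (W i ⬝ᵥ e')|
      ≤ (K * ∑ i ∈ s, √(∑ j, W i j ^ 2)) * √(∑ j, (e j - e' j) ^ 2) := by
  have hterm : ∀ i ∈ s, |φ i (W i ⬝ᵥ e) - φ i (W i ⬝ᵥ e')|
      ≤ K * (√(∑ j, W i j ^ 2) * √(∑ j, (e j - e' j) ^ 2)) := fun i hi => by
    have hCS := abs_dotProduct_le (W i) (e - e')
    rw [dotProduct_sub] at hCS
    simpa only [Real.dist_eq] using ((hφ i hi).dist_le_mul _ _).trans (by gcongr; exact hCS)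
  calc |∑ i ∈ s, φ i (W i ⬝ᵥ e) - ∑ i ∈ s, φ i (W i ⬝ᵥ e')|
      ≤ ∑ i ∈ s, |φ i (W i ⬝ᵥ e) - φ i (W i ⬝ᵥ e')| := by
        rw [← sum_sub_distrib]; exact abs_sum_le_sum_abs _ _
    _ ≤ ∑ i ∈ s, K * (√(∑ j, W i j ^ 2) * √(∑ j, (e j - e' j) ^ 2)) := sum_le_sum hterm
    _ = (K * ∑ i ∈ s, √(∑ j, W i j ^ 2)) * √(∑ j, (e j - e' j) ^ 2) := by
        rw [mul_sum, sum_mul]; simp only [mul_assoc]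

theorem encoding_objective_convex_lipschitz_general
    (V H : ℕ)
    (W : Fin V → Fin H → ℝ)
    (x : Fin V → ℝ) (hx : ∀ v, x v ∈ Set.Icc (-1 : ℝ) 1) :
    ConvexOn ℝ Set.univ
      (fun e : Fin H → ℝ =>
        ∑ v, (-(x v) * (∑ h, W v h * e h) + Psi (∑ h, W v h * e h)))
    ∧
    ∀ e e' : Fin H → ℝ,
      |(∑ v, (-(x v) * (∑ h, W v h * e h) + Psi (∑ h, W v h * e h)))
        - (∑ v, (-(x v) * (∑ h, W v h * e' h) + Psi (∑ h, W v h * e' h)))|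
        ≤ (2 * ∑ v, Real.sqrt (∑ h, (W v h) ^ 2)) * Real.sqrt (∑ h, (e h - e' h) ^ 2) := by
  have hconvex : ∀ v, ConvexOn ℝ Set.univ fun t => -x v * t + Psi t := fun v =>
    ((LinearMap.mulLeft ℝ (-x v)).convexOn convex_univ).add convexOn_Psi
  have hlip : ∀ v ∈ univ, LipschitzWith 2 fun t => -x v * t + Psi t := fun v _ =>
    lipschitzWith_mul_add_Psi (by rw [abs_neg]; exact abs_le.2 (hx v))
  -- `∑ h, W v h * e h` is `W v ⬝ᵥ e` by definition.
  exact ⟨ConvexOn.fun_sum convex_univ _ fun v _ => (hconvex v).comp_dotProduct (W v),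
    fun e e' => by exact_mod_cast abs_sum_comp_dotProduct_sub_le univ W hlip e e'⟩

/-- The encoding objective `e ↦ Σ_v [-x_v·(w_vᵀe) + Ψ(w_vᵀe)]` is convex on `ℝ^H` and
Lipschitz w.r.t. the Euclidean norm with constant at most `2·Σ_v ‖w_v‖₂`. -/
theorem encoding_objective_convex_lipschitz
    (V H : ℕ) (hV : 0 < V) (hH : 0 < H)
    (W : Fin V → Fin H → ℝ)
    (x : Fin V → ℝ) (hx : ∀ v, x v ∈ Set.Icc (-1 : ℝ) 1) :
    ConvexOn ℝ Set.univ
      (fun e : Fin H → ℝ =>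
        ∑ v, (-(x v) * (∑ h, W v h * e h) + Psi (∑ h, W v h * e h)))
    ∧
    ∀ e e' : Fin H → ℝ,
      |(∑ v, (-(x v) * (∑ h, W v h * e h) + Psi (∑ h, W v h * e h)))
        - (∑ v, (-(x v) * (∑ h, W v h * e' h) + Psi (∑ h, W v h * e' h)))|
        ≤ (2 * ∑ v, Real.sqrt (∑ h, (W v h) ^ 2)) * Real.sqrt (∑ h, (e h - e' h) ^ 2) :=
  encoding_objective_convex_lipschitz_general V H W x hx
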